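/- If M is an n×n P-matrix, then for every sign vector σ ∈ {−1,+1}ⁿ there exists a vector x ∈ ℝⁿ such that σ_j x_j > 0 and σ_j (Mx)_j > 0 for every j ∈ [n]. -/

import Mathlib

open Matrix

/-- A square real matrix is a P-matrix if all of its principal minors are positive. -/
def IsPMat {n : ℕ} (M : Matrix (Fin n) (Fin n) ℝ) : Prop :=
  ∀ S : Finset (Fin n),
    0 < (M.submatrix (Subtype.val : {i // i ∈ S} → Fin n) Subtype.val).det

/-!
Conjugating by `D = diagonal σ` leaves every principal minor unchanged up to the positive factor
`(∏ σ_S)²`, so it suffices to show that a P-matrix `A` is semipositive: `x > 0` and `A x > 0` for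
some `x`. If not, Gordan's alternative gives `u, w ≥ 0`, not both zero, with `u + Aᵀ w = 0`; then
`w ≠ 0` and `w_k (Aᵀ w)_k = -w_k u_k ≤ 0` for every `k`. No P-matrix reverses the sign of a nonzero
vector in this way: on the support `S` of `w` we get `(Aᵀ_S + D) w_S = 0` for a nonnegative
diagonal `D`, whereas `det (B + D) = ∑_T (∏_{i ∉ T} d_i) det B_T > 0` for every P-matrix `B`.
-/

open Finset

namespace Matrix

variable {ι κ m : Type*}

theorem det_add_diagonal [Fintype ι] [DecidableEq ι] {R : Type*} [CommRing R]
    (A : Matrix ι ι R) (d : ι → R) :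
    (A + diagonal d).det =
      ∑ s : Finset ι, (∏ i ∈ sᶜ, d i) * (A.submatrix ((↑) : s → ι) (↑)).det := by
  have hrows (s : Finset ι) : s.piecewise A.row (diagonal d).row =
      fun i => (if i ∈ sᶜ then d i else 1) • s.piecewise A.row (1 : Matrix ι ι R).row i := by
    ext i j
    by_cases hi : i ∈ s <;> simp [hi, diagonal_apply, one_apply]
  change detRowAlternating (A.row + (diagonal d).row) = _
  rw [AlternatingMap.map_add_univ]
  refine sum_congr rfl fun s _ => ?_
  rw [hrows, AlternatingMap.map_smul_univ, ← det_piecewise_one_eq_submatrix_det, smul_eq_mul,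
    prod_ite_mem, univ_inter]
  rfl

theorem submatrix_subtype_mulVec [Fintype ι] {R : Type*} [NonUnitalNonAssocSemiring R]
    (A : Matrix κ ι R) (r : m → κ) {p : ι → Prop} [DecidablePred p] {x : ι → R}
    (hx : ∀ i, ¬p i → x i = 0) :
    A.submatrix r ((↑) : {i // p i} → ι) *ᵥ (fun i => x i) = (A *ᵥ x) ∘ r := by
  ext k
  simp only [Function.comp_apply, mulVec, dotProduct, submatrix_apply]
  rw [← Fintype.sum_subtype_add_sum_subtype p,
    Fintype.sum_eq_zero (fun i : {i // ¬p i} => A (r k) i * x i) fun i => by simp [hx i i.2],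
    add_zero]

/-- Gordan's alternative. The separating functional between `0` and the image of the standard
simplex under `y ↦ y ᵥ* A` is the solution `x`. -/
theorem exists_mulVec_pos_of_vecMul_ne_zero [Fintype ι] [Fintype m] (A : Matrix m ι ℝ)
    (hA : ∀ y : m → ℝ, 0 ≤ y → y ≠ 0 → y ᵥ* A ≠ 0) : ∃ x, ∀ i, 0 < (A *ᵥ x) i := by
  classical
  set C := vecMulLinear A '' stdSimplex ℝ m
  have hCconvex : Convex ℝ C := (convex_stdSimplex ℝ m).linear_image _
  have hCclosed : IsClosed C :=
    ((isCompact_stdSimplex ℝ m).image (vecMulLinear A).continuous_of_finiteDimensional).isClosed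
  have h0 : (0 : ι → ℝ) ∉ C := by
    rintro ⟨y, ⟨hy0, hy1⟩, hyA⟩
    exact hA y hy0 (by rintro rfl; simp at hy1) hyA
  obtain ⟨f, u, hu, hf⟩ := geometric_hahn_banach_point_closed hCconvex hCclosed h0
  set x : ι → ℝ := fun j => f (Pi.single j 1)
  have hfx (v : ι → ℝ) : f v = v ⬝ᵥ x := by
    conv_lhs => rw [← univ_sum_single v]
    refine (map_sum f _ _).trans (sum_congr rfl fun j _ => ?_)
    rw [← smul_eq_mul, ← map_smul, ← Pi.single_smul', smul_eq_mul, mul_one]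
  refine ⟨x, fun i => ?_⟩
  have hrow := hf _ ⟨Pi.single i 1, single_mem_stdSimplex ℝ i, rfl⟩
  rw [vecMulLinear_apply, single_one_vecMul, hfx] at hrow
  rw [map_zero] at hu
  exact hu.trans hrow

/-- `IsPMat` over an arbitrary finite index type, so that principal submatrices, indexed by
subtypes, are again P-matrices. -/
def IsPMatrix [Fintype ι] [DecidableEq ι] (A : Matrix ι ι ℝ) : Prop :=
  ∀ s : Finset ι, 0 < (A.submatrix ((↑) : s → ι) (↑)).det

namespace IsPMatrix

variable [Fintype ι] [DecidableEq ι] {A : Matrix ι ι ℝ}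

theorem det_add_diagonal_pos (hA : A.IsPMatrix) {d : ι → ℝ} (hd : 0 ≤ d) :
    0 < (A + diagonal d).det := by
  rw [det_add_diagonal]
  refine sum_pos' (fun s _ => mul_nonneg (prod_nonneg fun i _ => hd i) (hA s).le)
    ⟨univ, mem_univ _, ?_⟩
  simpa using hA univ

theorem submatrix [Fintype κ] [DecidableEq κ] (hA : A.IsPMatrix) (f : κ ↪ ι) :
    (A.submatrix f f).IsPMatrix := fun t => by
  have := hA (t.map f)
  rwa [← det_submatrix_equiv_self (t.equivMap f)] at this

theorem transpose (hA : A.IsPMatrix) : Aᵀ.IsPMatrix := fun s => by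
  simpa [← transpose_submatrix, det_transpose] using hA s

theorem diagonal_mul_mul_diagonal (hA : A.IsPMatrix) {σ : ι → ℝ} (hσ : ∀ i, σ i ≠ 0) :
    (diagonal σ * A * diagonal σ).IsPMatrix := fun s => by
  have hsub : (diagonal σ * A * diagonal σ).submatrix ((↑) : s → ι) (↑) =
      diagonal (fun i : s => σ i) * A.submatrix (↑) (↑) * diagonal (fun i : s => σ i) := by
    ext i j
    simp [diagonal_mul, mul_diagonal]
  have hprod : ∏ i : s, σ i ≠ 0 := prod_ne_zero_iff.2 fun i _ => hσ i
  rw [hsub, det_mul, det_mul, det_diagonal]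
  nlinarith [hA s, sq_pos_of_ne_zero hprod]

theorem exists_mul_mulVec_pos (hA : A.IsPMatrix) {x : ι → ℝ} (hx : x ≠ 0) :
    ∃ k, 0 < x k * (A *ᵥ x) k := by
  by_contra! hrev
  set e : {k // x k ≠ 0} ↪ ι := Function.Embedding.subtype _
  set y : {k // x k ≠ 0} → ℝ := fun k => x k
  set d : {k // x k ≠ 0} → ℝ := fun k => -(A *ᵥ x) k / x k
  have hAy : A.submatrix e e *ᵥ y = (A *ᵥ x) ∘ e :=
    submatrix_subtype_mulVec A e fun i hi => not_not.1 hi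
  have hd : 0 ≤ d := fun k => by
    change 0 ≤ -(A *ᵥ x) k / x k
    rw [← mul_div_mul_left _ _ k.2, mul_neg]
    exact div_nonneg (neg_nonneg.2 (hrev k)) (mul_self_nonneg _)
  have hker : (A.submatrix e e + diagonal d) *ᵥ y = 0 := by
    ext k
    rw [add_mulVec, hAy, Pi.add_apply, mulVec_diagonal]
    change (A *ᵥ x) k + -(A *ᵥ x) k / x k * x k = 0
    rw [div_mul_cancel₀ _ k.2, add_neg_cancel]
  have hy : y ≠ 0 := by
    obtain ⟨k, hk⟩ := Function.ne_iff.1 hx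
    exact Function.ne_iff.2 ⟨⟨k, hk⟩, hk⟩
  exact ((hA.submatrix e).det_add_diagonal_pos hd).ne' (exists_mulVec_eq_zero_iff.1 ⟨y, hy, hker⟩)

theorem exists_pos_mulVec_pos (hA : A.IsPMatrix) :
    ∃ x, (∀ j, 0 < x j) ∧ ∀ j, 0 < (A *ᵥ x) j := by
  obtain ⟨x, hx⟩ := exists_mulVec_pos_of_vecMul_ne_zero (fromRows (1 : Matrix ι ι ℝ) A)
    fun y hy0 hy hyA => by
      rw [vecMul_fromRows, vecMul_one, ← mulVec_transpose] at hyA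
      have hw : y ∘ Sum.inr ≠ 0 := fun hw => by
        rw [hw, mulVec_zero, add_zero] at hyA
        exact hy (funext (Sum.rec (congrFun hyA) (congrFun hw)))
      obtain ⟨k, hk⟩ := hA.transpose.exists_mul_mulVec_pos hw
      have hwk : (Aᵀ *ᵥ (y ∘ Sum.inr)) k = -y (Sum.inl k) :=
        eq_neg_of_add_eq_zero_right (congrFun hyA k)
      rw [hwk, Function.comp_apply, mul_neg] at hk
      exact (neg_pos.1 hk).not_ge (mul_nonneg (hy0 _) (hy0 _))
  exact ⟨x, fun j => by simpa using hx (Sum.inl j), fun j => by simpa using hx (Sum.inr j)⟩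

end IsPMatrix

end Matrix

theorem isPMat_iff_isPMatrix {n : ℕ} {M : Matrix (Fin n) (Fin n) ℝ} : IsPMat M ↔ M.IsPMatrix :=
  Iff.rfl

theorem pMatrix_sign_vector {n : ℕ} (M : Matrix (Fin n) (Fin n) ℝ) (hM : IsPMat M)
    (σ : Fin n → ℝ) (hσ : ∀ j, σ j = 1 ∨ σ j = -1) :
    ∃ x : Fin n → ℝ, ∀ j, 0 < σ j * x j ∧ 0 < σ j * M.mulVec x j := by
  have hσ0 : ∀ j, σ j ≠ 0 := fun j => by rcases hσ j with h | h <;> simp [h]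
  obtain ⟨x, hx, hDMDx⟩ :=
    ((isPMat_iff_isPMatrix.1 hM).diagonal_mul_mul_diagonal hσ0).exists_pos_mulVec_pos
  refine ⟨diagonal σ *ᵥ x, fun j => ⟨?_, ?_⟩⟩
  · rw [mulVec_diagonal, ← mul_assoc]
    exact mul_pos (mul_self_pos.2 (hσ0 j)) (hx j)
  · simpa [← mulVec_mulVec, mulVec_diagonal] using hDMDx j
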